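/- arXiv:2510.01759 — 5 statements merged into one kernel-verified Lean document; each statement's English description precedes it below -/
import Mathlib

section
/- For every μ ∈ Δ(S) and every M ∈ ℕ with M ≥ 1, the set T_{M,μ} of Borel probability measures on Δ(S) with barycenter μ whose support has at most M points is compact in the topology of weak convergence of measures. -/
/-!
A probability measure carried by at most `M` points is a convex combination of `M` Dirac masses,
so `T_{M,μ}` is the image of the compact space `Δ(Fin M) × Δ(S)^M` of weights and atoms under a
map that is continuous for the weak topology. The barycenter condition is closed, because
integrating a continuous function on the compact simplex is weakly continuous; its preimage is
therefore compact, and so is its image `T_{M,μ}`.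
-/

open MeasureTheory Set Function

theorem stdSimplex.continuous_apply {ι : Type*} [Fintype ι] (i : ι) :
    Continuous fun w : stdSimplex ℝ ι => w i :=
  (_root_.continuous_apply i).comp continuous_subtype_val

theorem stdSimplex.sum_ofReal_eq_one {ι : Type*} [Fintype ι] (w : stdSimplex ℝ ι) :
    ∑ i, ENNReal.ofReal (w i) = 1 := by
  rw [← ENNReal.ofReal_sum_of_nonneg fun i _ => stdSimplex.zero_le w i, stdSimplex.sum_eq_one w,
    ENNReal.ofReal_one]

theorem stdSimplex.extend_zero_mem {κ ι : Type*} [Fintype κ] [Fintype ι] {e : κ → ι}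
    (he : Injective e) {v : κ → ℝ} (hv : v ∈ stdSimplex ℝ κ) :
    Function.extend e v 0 ∈ stdSimplex ℝ ι := by
  refine ⟨fun i => ?_, ?_⟩
  · by_cases hi : ∃ k, e k = i
    · obtain ⟨k, rfl⟩ := hi
      simpa only [he.extend_apply] using hv.1 k
    · simp only [extend_apply' _ _ _ hi, Pi.zero_apply, le_refl]
  · have hsum := tsum_extend_zero he v
    rwa [tsum_fintype, tsum_fintype, hv.2] at hsum

theorem MeasureTheory.Measure.eq_sum_smul_dirac_of_measure_compl_eq_zero {X : Type*}
    [MeasurableSpace X] [MeasurableSingletonClass X] {ν : Measure X} {s : Set X}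
    (hs : s.Countable) (hν : ν sᶜ = 0) :
    ν = Measure.sum fun a : s => ν {(a : X)} • Measure.dirac (a : X) := by
  have : Countable s := hs.to_subtype
  calc ν = ν.restrict (⋃ a : s, {(a : X)}) := by
        rw [iUnion_of_singleton_coe, Measure.restrict_eq_self_of_ae_mem hν]
    _ = _ := by
        rw [Measure.restrict_iUnion (fun a b hab => disjoint_singleton.2 (Subtype.coe_ne_coe.2 hab))
          fun _ => measurableSet_singleton _]
        simp only [Measure.restrict_singleton]

namespace MeasureTheory

variable {X : Type*} [MeasurableSpace X]

section DiscreteMeasure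

variable {ι : Type*} [Fintype ι]

noncomputable def discreteMeasure (w : stdSimplex ℝ ι) (x : ι → X) : ProbabilityMeasure X :=
  ⟨Measure.sum fun i => ENNReal.ofReal (w i) • Measure.dirac (x i), ⟨by
    simpa [Measure.sum_apply _ MeasurableSet.univ] using stdSimplex.sum_ofReal_eq_one w⟩⟩

theorem coe_discreteMeasure (w : stdSimplex ℝ ι) (x : ι → X) :
    (discreteMeasure w x : Measure X) =
      Measure.sum fun i => ENNReal.ofReal (w i) • Measure.dirac (x i) := rfl

theorem discreteMeasure_range (w : stdSimplex ℝ ι) (x : ι → X) :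
    (discreteMeasure w x : Measure X) (range x) = 1 := by
  simpa [coe_discreteMeasure, Measure.sum_apply_of_countable,
    Measure.dirac_apply_of_mem (mem_range_self _)] using stdSimplex.sum_ofReal_eq_one w

variable [MeasurableSingletonClass X]

theorem integral_discreteMeasure (w : stdSimplex ℝ ι) (x : ι → X) (f : X → ℝ) :
    ∫ y, f y ∂(discreteMeasure w x : Measure X) = ∑ i, w i * f (x i) := by
  rw [coe_discreteMeasure, integral_sum_dirac fun _ => ENNReal.ofReal_ne_top, tsum_fintype]
  simp only [ENNReal.toReal_ofReal (stdSimplex.zero_le w _), smul_eq_mul]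

theorem continuous_discreteMeasure [TopologicalSpace X] [OpensMeasurableSpace X] :
    Continuous fun p : stdSimplex ℝ ι × (ι → X) => discreteMeasure p.1 p.2 := by
  refine ProbabilityMeasure.continuous_iff_forall_continuous_integral.2 fun f => ?_
  simp only [integral_discreteMeasure]
  exact continuous_finsetSum _ fun i _ =>
    ((stdSimplex.continuous_apply i).comp continuous_fst).mul
      (f.continuous.comp ((continuous_apply i).comp continuous_snd))

end DiscreteMeasure

theorem exists_discreteMeasure_eq [MeasurableSingletonClass X] {M : ℕ}
    (τ : ProbabilityMeasure X) {F : Finset X} (hcard : F.card ≤ M)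
    (hF : (τ : Measure X) F = 1) :
    ∃ (w : stdSimplex ℝ (Fin M)) (x : Fin M → X), discreteMeasure w x = τ := by
  obtain ⟨y₀, -⟩ : (F : Set X).Nonempty :=
    nonempty_of_measure_ne_zero (hF ▸ one_ne_zero)
  -- the atoms of `F` are padded to `M` points with weight zero
  let e : F → Fin M := fun a => Fin.castLE hcard (F.equivFin a)
  have he : Injective e := (Fin.castLE_injective hcard).comp F.equivFin.injective
  let w : Fin M → ℝ := Function.extend e (fun a => (τ : Measure X).real {(a : X)}) 0
  have hw : w ∈ stdSimplex ℝ (Fin M) := by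
    refine stdSimplex.extend_zero_mem he ⟨fun _ => measureReal_nonneg, ?_⟩
    rw [Finset.sum_coe_sort F fun a => (τ : Measure X).real {a}, sum_measureReal_singleton,
      measureReal_def, hF, ENNReal.toReal_one]
  let x : Fin M → X := Function.extend e Subtype.val fun _ => y₀
  refine ⟨⟨w, hw⟩, x, ProbabilityMeasure.toMeasure_injective ?_⟩
  have hFc : (τ : Measure X) (F : Set X)ᶜ = 0 := by
    rw [prob_compl_eq_zero_iff F.finite_toSet.measurableSet, hF]
  rw [coe_discreteMeasure,
    Measure.eq_sum_smul_dirac_of_measure_compl_eq_zero F.countable_toSet hFc,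
    ← Measure.sum_extend_zero he]
  refine congrArg Measure.sum (funext fun i => ?_)
  change ENNReal.ofReal (w i) • Measure.dirac (x i) = _
  by_cases hi : ∃ a, e a = i
  · obtain ⟨a, rfl⟩ := hi
    simp only [w, x, he.extend_apply, ofReal_measureReal (measure_ne_top _ _)]
  · simp only [w, extend_apply' _ _ _ hi, Pi.zero_apply, ENNReal.ofReal_zero, zero_smul]

theorem range_discreteMeasure [MeasurableSingletonClass X] (M : ℕ) :
    range (fun p : stdSimplex ℝ (Fin M) × (Fin M → X) => discreteMeasure p.1 p.2) =
      {τ : ProbabilityMeasure X | ∃ F : Finset X, F.card ≤ M ∧ (τ : Measure X) F = 1} := by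
  classical
  ext τ
  constructor
  · rintro ⟨⟨w, x⟩, rfl⟩
    refine ⟨Finset.univ.image x, Finset.card_image_le.trans (Finset.card_fin M).le, ?_⟩
    simpa using discreteMeasure_range w x
  · rintro ⟨F, hcard, hF⟩
    obtain ⟨w, x, rfl⟩ := exists_discreteMeasure_eq τ hcard hF
    exact ⟨(w, x), rfl⟩

end MeasureTheory

theorem compact_TMmu_general {S : Type*} [Fintype S] (μ : stdSimplex ℝ S)
    (M : ℕ) :
    IsCompact {τ : ProbabilityMeasure (stdSimplex ℝ S) |
      (∀ s : S, (∫ ν, (ν : S → ℝ) s ∂(τ : Measure (stdSimplex ℝ S))) = (μ : S → ℝ) s) ∧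
      ∃ F : Finset (stdSimplex ℝ S), F.card ≤ M ∧
        (τ : Measure (stdSimplex ℝ S)) (↑F) = 1} := by
  have hbarycenter : IsClosed {τ : ProbabilityMeasure (stdSimplex ℝ S) |
      ∀ s : S, (∫ ν, (ν : S → ℝ) s ∂(τ : Measure (stdSimplex ℝ S))) = (μ : S → ℝ) s} := by
    simp only [ofPred_forall]
    exact isClosed_iInter fun s => isClosed_eq
      (ProbabilityMeasure.continuous_integral_continuousMap
        (⟨_, stdSimplex.continuous_apply s⟩ : C(stdSimplex ℝ S, ℝ))) continuous_const
  rw [ofPred_and, ← range_discreteMeasure, ← image_preimage_eq_inter_range]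
  exact (hbarycenter.preimage continuous_discreteMeasure).isCompact.image
    continuous_discreteMeasure

/-- For every `μ ∈ Δ(S)` and every `M ≥ 1`, the set `T_{M,μ}` of Borel
probability measures on the simplex `Δ(S)` with barycenter `μ` whose support has at most `M`
points (i.e. all the mass sits on a finite set of at most `M` points) is compact in the
topology of weak convergence. -/
theorem compact_TMmu {S : Type*} [Fintype S] [Nonempty S] (μ : stdSimplex ℝ S)
    (M : ℕ) (hM : 1 ≤ M) :
    IsCompact {τ : ProbabilityMeasure (stdSimplex ℝ S) |
      (∀ s : S, (∫ ν, (ν : S → ℝ) s ∂(τ : Measure (stdSimplex ℝ S))) = (μ : S → ℝ) s) ∧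
      ∃ F : Finset (stdSimplex ℝ S), F.card ≤ M ∧
        (τ : Measure (stdSimplex ℝ S)) (↑F) = 1} :=
  compact_TMmu_general μ M
end

section
/- The sender's gain function W : Δ(S) → ℝ, defined by W(ν) = Σ_{t∈T} η(t) · max_{a ∈ A*_t(ν)} Σ_{s∈S} v(s,a) ν(s), is upper semicontinuous on Δ(S). -/
open MeasureTheory Finset

noncomputable section

/-- Expected utility `Σ_s u(s,a) ν(s)` of action `a` under belief `ν ∈ Δ(S)`. -/
def expUtil {S α : Type*} [Fintype S] (u : S → α → ℝ) (ν : stdSimplex ℝ S) (a : α) : ℝ :=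
  ∑ s, u s a * (ν : S → ℝ) s

/-- Admissible (optimal) actions `A*(ν) = argmax_a Σ_s u(s,a) ν(s)`. -/
def admissible {S α : Type*} [Fintype S] (u : S → α → ℝ) (ν : stdSimplex ℝ S) : Set α :=
  {a | ∀ b, expUtil u ν b ≤ expUtil u ν a}

/-- The sender's gain
`W(ν) = Σ_t η(t) · max_{a ∈ A*_t(ν)} Σ_s v(s,a) ν(s)` (ties broken in the sender's favor);
the maximum over the (finite nonempty) set of admissible action profiles is expressed as a
supremum. -/
def senderGain {S L : Type*} [Fintype S] [Fintype L] [DecidableEq L]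
    {A T : L → Type*} [∀ l, Fintype (A l)] [∀ l, Fintype (T l)]
    (u : ∀ l, T l → S → A l → ℝ) (v : S → (∀ l, A l) → ℝ) (η : ∀ l, T l → ℝ)
    (ν : stdSimplex ℝ S) : ℝ :=
  ∑ t : ∀ l, T l, (∏ l, η l (t l)) *
    sSup {x : ℝ | ∃ a : ∀ l, A l, (∀ l, a l ∈ admissible (u l (t l)) ν) ∧
      x = ∑ s, v s a * (ν : S → ℝ) s}

/-- Expected utility is continuous in the belief. -/
lemma expUtil_continuous {S α : Type*} [Fintype S] (w : S → α → ℝ) (a : α) :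
    Continuous (fun ν : stdSimplex ℝ S => expUtil w ν a) := by
  unfold expUtil
  exact continuous_finset_sum _ fun s _ =>
    continuous_const.mul ((continuous_apply s).comp continuous_subtype_val)

/-- The admissible set is nonempty. -/
lemma admissible_nonempty {S α : Type*} [Fintype S] [Fintype α] [Nonempty α]
    (w : S → α → ℝ) (ν : stdSimplex ℝ S) : (admissible w ν).Nonempty := by
  obtain ⟨b, -, hb⟩ := Finset.exists_max_image Finset.univ (expUtil w ν) univ_nonempty
  exact ⟨b, fun c => hb c (mem_univ c)⟩

/-- Near `ν₀`, admissible actions are admissible at `ν₀`. -/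
lemma admissible_eventually_subset {S α : Type*} [Fintype S] [Fintype α]
    (w : S → α → ℝ) (ν₀ : stdSimplex ℝ S) :
    ∀ᶠ ν in nhds ν₀, admissible w ν ⊆ admissible w ν₀ := by
  have h : ∀ a : α, ∀ᶠ ν in nhds ν₀, a ∈ admissible w ν → a ∈ admissible w ν₀ := by
    intro a
    by_cases h : a ∈ admissible w ν₀
    · exact Filter.Eventually.of_forall fun ν _ => h
    · simp only [admissible, Set.mem_setOf_eq, not_forall, not_le] at h
      obtain ⟨b, hb⟩ := h
      have := ((expUtil_continuous w a).continuousAt (x := ν₀)).eventually_lt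
        ((expUtil_continuous w b).continuousAt) hb
      exact this.mono fun ν hν ha => absurd (ha b) (not_le.2 hν)
  have := Filter.eventually_all.2 h
  exact this.mono fun ν hν a ha => hν a ha

/-- The sender's gain function `W : Δ(S) → ℝ` is upper semicontinuous. -/
theorem senderGain_upperSemicontinuous {S : Type*} [Fintype S] [Nonempty S]
    {L : Type*} [Fintype L] [DecidableEq L]
    {A : L → Type*} [∀ l, Fintype (A l)] [∀ l, Nonempty (A l)]
    {T : L → Type*} [∀ l, Fintype (T l)] [∀ l, Nonempty (T l)]
    (u : ∀ l, T l → S → A l → ℝ) (v : S → (∀ l, A l) → ℝ)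
    (η : ∀ l, T l → ℝ) (hη : ∀ l, η l ∈ stdSimplex ℝ (T l)) :
    UpperSemicontinuous (senderGain u v η) := by
  classical
  intro ν₀ y hy
  -- the finset of admissible profiles at ν₀
  set AdmF : (∀ l, T l) → Finset (∀ l, A l) := fun t =>
    univ.filter (fun a => ∀ l, a l ∈ admissible (u l (t l)) ν₀) with hAdmF
  have hne : ∀ t, (AdmF t).Nonempty := by
    intro t
    choose a ha using fun l => admissible_nonempty (u l (t l)) ν₀
    exact ⟨a, by simp [hAdmF, ha]⟩
  -- the continuous majorant
  set g : stdSimplex ℝ S → ℝ := fun ν =>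
    ∑ t : ∀ l, T l, (∏ l, η l (t l)) *
      (AdmF t).sup' (hne t) (fun a => expUtil v ν a) with hgdef
  have hgcont : Continuous g := by
    refine continuous_finset_sum _ fun t _ => continuous_const.mul ?_
    refine continuous_iff_continuousAt.2 fun ν => ?_
    exact ContinuousAt.finset_sup'_apply (hne t)
      (fun a _ => (expUtil_continuous v a).continuousAt)
  -- senderGain agrees with g at ν₀
  have hkey : senderGain u v η ν₀ = g ν₀ := by
    unfold senderGain
    refine Finset.sum_congr rfl fun t _ => ?_
    congr 1
    rw [Finset.sup'_eq_csSup_image]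
    congr 1
    ext x
    simp only [Set.mem_setOf_eq, Set.mem_image, Finset.mem_coe, hAdmF, mem_filter, mem_univ,
      true_and]
    constructor
    · rintro ⟨a, ha, rfl⟩; exact ⟨a, ha, rfl⟩
    · rintro ⟨a, ha, rfl⟩; exact ⟨a, ha, rfl⟩
  -- eventually senderGain ≤ g
  have hsub : ∀ᶠ ν in nhds ν₀, ∀ l (τ : T l),
      admissible (u l τ) ν ⊆ admissible (u l τ) ν₀ :=
    Filter.eventually_all.2 fun l => Filter.eventually_all.2 fun τ =>
      admissible_eventually_subset (u l τ) ν₀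
  have hle : ∀ᶠ ν in nhds ν₀, senderGain u v η ν ≤ g ν := by
    refine hsub.mono fun ν hν => ?_
    unfold senderGain
    refine Finset.sum_le_sum fun t _ => ?_
    have hw : 0 ≤ ∏ l, η l (t l) := Finset.prod_nonneg fun l _ => (hη l).1 (t l)
    refine mul_le_mul_of_nonneg_left ?_ hw
    refine csSup_le ?_ ?_
    · obtain ⟨a, ha⟩ : ∃ a : ∀ l, A l, ∀ l, a l ∈ admissible (u l (t l)) ν := by
        choose a ha using fun l => admissible_nonempty (u l (t l)) ν
        exact ⟨a, ha⟩
      exact ⟨_, a, ha, rfl⟩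
    · rintro x ⟨a, ha, rfl⟩
      have hmem : a ∈ AdmF t := by
        simp only [hAdmF, mem_filter, mem_univ, true_and]
        exact fun l => hν l (t l) (ha l)
      exact Finset.le_sup' (fun a => expUtil v ν a) hmem
  -- conclude
  have hgy : g ν₀ < y := hkey ▸ hy
  have hev : ∀ᶠ ν in nhds ν₀, g ν < y :=
    (hgcont.continuousAt (x := ν₀)).eventually_lt continuousAt_const hgy
  filter_upwards [hle, hev] with ν h1 h2
  exact lt_of_le_of_lt h1 h2

end
end

section
/- Let A be a finite set with |A| ≥ 2, take one receiver with one type, state set S = A, receiver utility u(s,a) = 1 if a = s and 0 otherwise, and sender utility v(s,a) = 1 if a = s and 0 otherwise (so that W(ν) = max_{s∈S} ν(s)). Let μ ∈ Δ(S) satisfy μ(s) > 0 for every s. Then W̄* = sup_{τ ∈ T_μ} ∫_{Δ(S)} W dτ = 1, and every finitely supported τ ∈ T_μ attaining this supremum equals Σ_{s∈S} μ(s) δ_{δ_s}; in particular its support has cardinality exactly |A|, so no optimal finitely supported τ has support of cardinality smaller than |A|. -/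
/-!
With matching utilities, `W(ν)` is the largest coordinate of `ν`, so `W ≤ 1` with equality exactly
at the vertices `δ_s` of the simplex. Hence `∫ W dτ ≤ 1` for every `τ`, with equality for full
disclosure `Σ_s μ(s) δ_{δ_s}`. Conversely an optimal `τ` is concentrated on the vertices, and the
barycenter condition then forces it to put mass `μ(s)` on `δ_s`; as `μ` has full support, every set
of full `τ`-measure contains all `|A|` vertices.
-/

open MeasureTheory Finset

noncomputable section

/-- Sender's gain for a single receiver with a single type:
`W(ν) = max_{a ∈ A*(ν)} Σ_s v(s,a) ν(s)` (ties broken in the sender's favor). -/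
def senderGain₁ {S α : Type*} [Fintype S] (u v : S → α → ℝ) (ν : stdSimplex ℝ S) : ℝ :=
  sSup {x : ℝ | ∃ a ∈ admissible u ν, x = expUtil v ν a}

theorem stdSimplex.eq_vertex_of_apply_eq_one {X : Type*} [Fintype X] [DecidableEq X]
    {ν : stdSimplex ℝ X} {x : X} (h : ν x = 1) : ν = stdSimplex.vertex x := by
  have hrest : ∑ y ∈ univ.erase x, ν y = 0 := by
    have := stdSimplex.sum_eq_one ν
    rw [← add_sum_erase _ _ (mem_univ x), h] at this
    linarith
  ext y
  by_cases hy : y = x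
  · subst hy
    simp [h]
  · rw [stdSimplex.vertex_coe, Pi.single_eq_of_ne hy]
    exact (sum_eq_zero_iff_of_nonneg fun z _ => stdSimplex.zero_le ν z).1 hrest y
      (mem_erase.2 ⟨hy, mem_univ y⟩)

theorem senderGain₁_self_eq_of_mem_admissible {S α : Type*} [Fintype S] (u : S → α → ℝ)
    {ν : stdSimplex ℝ S} {a : α} (ha : a ∈ admissible u ν) :
    senderGain₁ u u ν = expUtil u ν a := by
  have hvalues : {x : ℝ | ∃ b ∈ admissible u ν, x = expUtil u ν b} = {expUtil u ν a} := by
    ext x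
    constructor
    · rintro ⟨b, hb, rfl⟩
      exact le_antisymm (ha b) (hb a)
    · rintro rfl
      exact ⟨a, ha, rfl⟩
  rw [senderGain₁, hvalues, csSup_singleton]

section Atoms

variable {X : Type*} [MeasurableSpace X] [MeasurableSingletonClass X]

theorem integral_finsetSum_smul_dirac {ι E : Type*} [NormedAddCommGroup E] [NormedSpace ℝ E]
    [CompleteSpace E] (s : Finset ι) {c : ι → ENNReal} (hc : ∀ i ∈ s, c i ≠ ⊤) (x : ι → X)
    (f : X → E) :
    ∫ y, f y ∂(∑ i ∈ s, c i • Measure.dirac (x i)) = ∑ i ∈ s, (c i).toReal • f (x i) := by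
  rw [integral_finsetSum_measure fun i hi => (integrable_dirac (by simp)).smul_measure (hc i hi)]
  simp only [integral_smul_measure, integral_dirac]

theorem eq_sum_smul_dirac_of_measure_compl_eq_zero (τ : Measure X) {E : Finset X}
    (hE : τ (↑E)ᶜ = 0) : τ = ∑ x ∈ E, τ {x} • Measure.dirac x := by
  classical
  ext Y hY
  calc τ Y = τ (Y ∩ E) := (measure_inter_conull hE).symm
    _ = ∑ x ∈ E.filter (· ∈ Y), τ {x} := by
      rw [sum_measure_singleton]
      congr 1
      ext x
      simp [and_comm]
    _ = _ := by
      rw [sum_filter, Measure.coe_finsetSum, Finset.sum_apply]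
      refine sum_congr rfl fun x _ => ?_
      by_cases hx : x ∈ Y <;> simp [hx, hY]

end Atoms

def matchingUtility (A : Type*) [DecidableEq A] : A → A → ℝ := fun s a => if a = s then 1 else 0

section Matching

variable {A : Type*} [Fintype A] [DecidableEq A]

theorem expUtil_matchingUtility (ν : stdSimplex ℝ A) (a : A) :
    expUtil (matchingUtility A) ν a = ν a := by
  simp [expUtil, matchingUtility]

variable [Nonempty A]

theorem senderGain₁_matchingUtility (ν : stdSimplex ℝ A) :
    senderGain₁ (matchingUtility A) (matchingUtility A) ν = univ.sup' univ_nonempty ν := by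
  obtain ⟨a, -, ha⟩ := exists_mem_eq_sup' univ_nonempty ν
  have hadm : a ∈ admissible (matchingUtility A) ν := fun b => by
    simpa only [expUtil_matchingUtility, ← ha] using le_sup' ν (mem_univ b)
  rw [senderGain₁_self_eq_of_mem_admissible _ hadm, expUtil_matchingUtility, ha]

theorem senderGain₁_matchingUtility_mem_Icc (ν : stdSimplex ℝ A) :
    senderGain₁ (matchingUtility A) (matchingUtility A) ν ∈ Set.Icc 0 1 := by
  rw [senderGain₁_matchingUtility]
  exact ⟨le_sup'_of_le _ (mem_univ (Classical.arbitrary A)) (stdSimplex.zero_le ν _),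
    sup'_le _ _ fun a _ => stdSimplex.le_one ν a⟩

theorem senderGain₁_matchingUtility_eq_one_iff (ν : stdSimplex ℝ A) :
    senderGain₁ (matchingUtility A) (matchingUtility A) ν = 1 ↔ ∃ s, ν = stdSimplex.vertex s := by
  rw [senderGain₁_matchingUtility]
  constructor
  · intro h
    obtain ⟨a, -, ha⟩ := exists_mem_eq_sup' univ_nonempty ν
    exact ⟨a, stdSimplex.eq_vertex_of_apply_eq_one (ha ▸ h)⟩
  · rintro ⟨s, rfl⟩
    exact le_antisymm (sup'_le _ _ fun a _ => stdSimplex.le_one _ a)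
      (le_sup'_of_le _ (mem_univ s) (by simp))

theorem integrable_senderGain₁_matchingUtility (τ : Measure (stdSimplex ℝ A)) [IsFiniteMeasure τ] :
    Integrable (senderGain₁ (matchingUtility A) (matchingUtility A)) τ := by
  have hcont : Continuous (senderGain₁ (matchingUtility A) (matchingUtility A)) := by
    rw [funext senderGain₁_matchingUtility]
    exact Continuous.finset_sup'_apply univ_nonempty fun a _ =>
      (continuous_apply a).comp continuous_subtype_val
  refine .of_bound hcont.aestronglyMeasurable 1 (.of_forall fun ν => ?_)
  obtain ⟨h0, h1⟩ := senderGain₁_matchingUtility_mem_Icc ν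
  rwa [Real.norm_eq_abs, abs_of_nonneg h0]

end Matching

section FullDisclosure

variable {A : Type*} [Fintype A] [DecidableEq A]

def fullDisclosure (μ : stdSimplex ℝ A) : Measure (stdSimplex ℝ A) :=
  ∑ s, ENNReal.ofReal (μ s) • Measure.dirac (stdSimplex.vertex s)

variable (μ : stdSimplex ℝ A)

theorem integral_fullDisclosure {E : Type*} [NormedAddCommGroup E] [NormedSpace ℝ E]
    [CompleteSpace E] (f : stdSimplex ℝ A → E) :
    ∫ ν, f ν ∂fullDisclosure μ = ∑ s, μ s • f (stdSimplex.vertex s) := by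
  rw [fullDisclosure, integral_finsetSum_smul_dirac _ (fun _ _ => ENNReal.ofReal_ne_top)]
  simp only [ENNReal.toReal_ofReal (stdSimplex.zero_le μ _)]

instance : IsProbabilityMeasure (fullDisclosure μ) := by
  constructor
  simp only [fullDisclosure, Measure.coe_finsetSum, Finset.sum_apply, Measure.smul_apply,
    measure_univ, smul_eq_mul, mul_one]
  rw [← ENNReal.ofReal_sum_of_nonneg fun s _ => stdSimplex.zero_le μ s, stdSimplex.sum_eq_one,
    ENNReal.ofReal_one]

theorem integral_apply_fullDisclosure (t : A) : ∫ ν, ν t ∂fullDisclosure μ = μ t := by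
  simp [integral_fullDisclosure, Pi.single_apply]

theorem integral_senderGain₁_fullDisclosure [Nonempty A] :
    ∫ ν, senderGain₁ (matchingUtility A) (matchingUtility A) ν ∂fullDisclosure μ = 1 := by
  simp [integral_fullDisclosure,
    (senderGain₁_matchingUtility_eq_one_iff _).2 ⟨_, rfl⟩]

theorem vertex_mem_of_fullDisclosure_eq_one (hμ : ∀ s, 0 < μ s) {F : Finset (stdSimplex ℝ A)}
    (hF : fullDisclosure μ F = 1) (s : A) : stdSimplex.vertex s ∈ F := by
  have hnull : fullDisclosure μ (↑F)ᶜ = 0 := (prob_compl_eq_zero_iff F.measurableSet).2 hF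
  simp only [fullDisclosure, Measure.coe_finsetSum, Measure.coe_smul, Finset.sum_apply,
    Pi.smul_apply, Measure.dirac_apply, smul_eq_mul, sum_eq_zero_iff, mem_univ, mul_eq_zero,
    ENNReal.ofReal_eq_zero, Set.indicator_apply_eq_zero, Set.mem_compl_iff, SetLike.mem_coe,
    Pi.one_apply, one_ne_zero, imp_false, Decidable.not_not, forall_const] at hnull
  exact (hnull s).resolve_left (hμ s).not_ge

theorem card_le_card_of_fullDisclosure_eq_one (hμ : ∀ s, 0 < μ s) {F : Finset (stdSimplex ℝ A)}
    (hF : fullDisclosure μ F = 1) : Fintype.card A ≤ F.card :=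
  card_le_card_of_injOn _ (fun s _ => vertex_mem_of_fullDisclosure_eq_one μ hμ hF s)
    stdSimplex.vertex_injective.injOn

variable [Nonempty A]

theorem isGreatest_integral_senderGain₁_matchingUtility :
    IsGreatest {x : ℝ | ∃ τ : ProbabilityMeasure (stdSimplex ℝ A),
        (∀ s, ∫ ν, ν s ∂(τ : Measure (stdSimplex ℝ A)) = μ s) ∧
        x = ∫ ν, senderGain₁ (matchingUtility A) (matchingUtility A) ν
          ∂(τ : Measure (stdSimplex ℝ A))} 1 := by
  refine ⟨⟨⟨fullDisclosure μ, inferInstance⟩, integral_apply_fullDisclosure μ,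
    (integral_senderGain₁_fullDisclosure μ).symm⟩, ?_⟩
  rintro _ ⟨τ, -, rfl⟩
  calc _ ≤ ∫ _, (1 : ℝ) ∂(τ : Measure (stdSimplex ℝ A)) :=
        integral_mono (integrable_senderGain₁_matchingUtility _) (integrable_const 1)
          fun ν => (senderGain₁_matchingUtility_mem_Icc ν).2
    _ = 1 := by simp

theorem eq_fullDisclosure_of_integral_senderGain₁_eq_one (τ : Measure (stdSimplex ℝ A))
    [IsProbabilityMeasure τ] (hbary : ∀ s, ∫ ν, ν s ∂τ = μ s)
    (hopt : ∫ ν, senderGain₁ (matchingUtility A) (matchingUtility A) ν ∂τ = 1) :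
    τ = fullDisclosure μ := by
  have hW : ∀ᵐ ν ∂τ, senderGain₁ (matchingUtility A) (matchingUtility A) ν = 1 :=
    (integral_eq_iff_of_ae_le (integrable_senderGain₁_matchingUtility τ) (integrable_const 1)
      (.of_forall fun ν => (senderGain₁_matchingUtility_mem_Icc ν).2)).1 (by simpa using hopt)
  have hvertices : τ (↑(univ.image (stdSimplex.vertex (S := ℝ) (X := A))))ᶜ = 0 :=
    ae_iff.1 <| hW.mono fun ν hν => by
      obtain ⟨s, rfl⟩ := (senderGain₁_matchingUtility_eq_one_iff ν).1 hν
      exact mem_image_of_mem _ (mem_univ s)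
  have hτ : τ = ∑ s, τ {stdSimplex.vertex s} • Measure.dirac (stdSimplex.vertex s) :=
    (eq_sum_smul_dirac_of_measure_compl_eq_zero τ hvertices).trans
      (sum_image stdSimplex.vertex_injective.injOn)
  have hmass : ∀ s, τ {stdSimplex.vertex s} = ENNReal.ofReal (μ s) := by
    intro s
    have hs := hbary s
    rw [hτ, integral_finsetSum_smul_dirac _ fun _ _ => measure_ne_top _ _] at hs
    simp only [stdSimplex.vertex_coe, Pi.single_apply, smul_eq_mul, mul_ite, mul_one, mul_zero,
      sum_ite_eq, mem_univ, ↓reduceIte] at hs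
    rw [← hs, ENNReal.ofReal_toReal (measure_ne_top _ _)]
  rw [hτ, fullDisclosure]
  simp only [hmass]

end FullDisclosure

theorem lower_bound_on_messages_general {A : Type*} [Fintype A] [DecidableEq A]
    (u v : A → A → ℝ)
    (hu : ∀ s a, u s a = if a = s then 1 else 0)
    (hv : ∀ s a, v s a = if a = s then 1 else 0)
    (μ : stdSimplex ℝ A) (hμ : ∀ s, 0 < (μ : A → ℝ) s)
    (e : A → stdSimplex ℝ A) (he : ∀ s s', (e s : A → ℝ) s' = if s' = s then 1 else 0) :
    sSup {x : ℝ | ∃ τ : ProbabilityMeasure (stdSimplex ℝ A),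
        (∀ s, (∫ ν, (ν : A → ℝ) s ∂(τ : Measure (stdSimplex ℝ A))) = (μ : A → ℝ) s) ∧
        x = ∫ ν, senderGain₁ u v ν ∂(τ : Measure (stdSimplex ℝ A))} = 1 ∧
    ∀ τ : ProbabilityMeasure (stdSimplex ℝ A),
      (∀ s, (∫ ν, (ν : A → ℝ) s ∂(τ : Measure (stdSimplex ℝ A))) = (μ : A → ℝ) s) →
      (∃ F : Finset (stdSimplex ℝ A), (τ : Measure (stdSimplex ℝ A)) (↑F) = 1) →
      (∫ ν, senderGain₁ u v ν ∂(τ : Measure (stdSimplex ℝ A))) = 1 →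
      ((τ : Measure (stdSimplex ℝ A)) =
          ∑ s, ENNReal.ofReal ((μ : A → ℝ) s) • Measure.dirac (e s)) ∧
      (∀ F : Finset (stdSimplex ℝ A),
        (τ : Measure (stdSimplex ℝ A)) (↑F) = 1 → Fintype.card A ≤ F.card) := by
  obtain rfl : u = matchingUtility A := funext fun s => funext (hu s)
  obtain rfl : v = matchingUtility A := funext fun s => funext (hv s)
  obtain rfl : e = stdSimplex.vertex := funext fun s => stdSimplex.ext <| funext fun s' => by
    simp [he, Pi.single_apply]
  have : Nonempty A := not_isEmpty_iff.1 fun _ => by simpa using μ.2.2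
  refine ⟨(isGreatest_integral_senderGain₁_matchingUtility μ).csSup_eq, fun τ hbary _ hopt => ?_⟩
  have hτ : (τ : Measure (stdSimplex ℝ A)) = fullDisclosure μ :=
    eq_fullDisclosure_of_integral_senderGain₁_eq_one μ τ hbary hopt
  exact ⟨hτ, fun F hF => card_le_card_of_fullDisclosure_eq_one μ hμ (hτ ▸ hF)⟩

/-- **lower bound on the number of messages.** With `S = A`, `|A| ≥ 2`,
matching utilities `u(s,a) = v(s,a) = 1_{a=s}` and a full-support prior `μ`, the optimal
value `sup_{τ ∈ T_μ} ∫ W dτ` equals `1` and the unique finitely supported optimal `τ` is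
`Σ_s μ(s) δ_{δ_s}`, whose support has exactly `|A|` points. -/
theorem lower_bound_on_messages {A : Type*} [Fintype A] [DecidableEq A]
    (hA : 2 ≤ Fintype.card A)
    (u v : A → A → ℝ)
    (hu : ∀ s a, u s a = if a = s then 1 else 0)
    (hv : ∀ s a, v s a = if a = s then 1 else 0)
    (μ : stdSimplex ℝ A) (hμ : ∀ s, 0 < (μ : A → ℝ) s)
    (e : A → stdSimplex ℝ A) (he : ∀ s s', (e s : A → ℝ) s' = if s' = s then 1 else 0) :
    sSup {x : ℝ | ∃ τ : ProbabilityMeasure (stdSimplex ℝ A),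
        (∀ s, (∫ ν, (ν : A → ℝ) s ∂(τ : Measure (stdSimplex ℝ A))) = (μ : A → ℝ) s) ∧
        x = ∫ ν, senderGain₁ u v ν ∂(τ : Measure (stdSimplex ℝ A))} = 1 ∧
    ∀ τ : ProbabilityMeasure (stdSimplex ℝ A),
      (∀ s, (∫ ν, (ν : A → ℝ) s ∂(τ : Measure (stdSimplex ℝ A))) = (μ : A → ℝ) s) →
      (∃ F : Finset (stdSimplex ℝ A), (τ : Measure (stdSimplex ℝ A)) (↑F) = 1) →
      (∫ ν, senderGain₁ u v ν ∂(τ : Measure (stdSimplex ℝ A))) = 1 →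
      ((τ : Measure (stdSimplex ℝ A)) =
          ∑ s, ENNReal.ofReal ((μ : A → ℝ) s) • Measure.dirac (e s)) ∧
      (∀ F : Finset (stdSimplex ℝ A),
        (τ : Measure (stdSimplex ℝ A)) (↑F) = 1 → Fintype.card A ≤ F.card) :=
  lower_bound_on_messages_general u v hu hv μ hμ e he

end
end

section
/- Fix M ∈ ℕ, μ ∈ Δ(S), and a sequence ε_n > 0 with ε_n → 0. If τ^{ε_n} ∈ T_{M,μ} converges weakly to τ⁰ ∈ T_{M,μ}, then limsup_{n→∞} ∫_{Δ(S)} W^{ε_n}(ν) dτ^{ε_n}(ν) ≤ ∫_{Δ(S)} W(ν) dτ⁰(ν). -/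
/-!
As `ε → 0⁺`, a receiver's Gibbs strategy puts weight `≲ exp (-gap / ε)` on every action that is
not optimal at `x`, uniformly for beliefs `ν` near `x`. Hence near `(0, x)` the regularized gain
`W^ε(ν)` is at most `W(x) + δ`: the regularized play is almost supported on admissible profiles,
where the sender gets at most the best admissible payoff. Since `τ⁰` has finite support `F`, these
local bounds around the points of `F` glue into one continuous `g` with `W^{ε_n} ≤ g` for large `n`
and `g ≤ W + δ` on `F`; weak convergence then gives
`limsup ∫ W^{ε_n} dτ^{ε_n} ≤ ∫ g dτ⁰ ≤ ∫ W dτ⁰ + δ`.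
-/

open MeasureTheory Finset

noncomputable section

/-- `T_μ` : Borel probability measures on `Δ(S)` with barycenter `μ`, with the topology of
weak convergence. -/
def barycentric {S : Type*} [Fintype S] (μ : stdSimplex ℝ S) :
    Set (ProbabilityMeasure (stdSimplex ℝ S)) :=
  {τ | ∀ s : S, (∫ ν, (ν : S → ℝ) s ∂(τ : Measure (stdSimplex ℝ S))) = (μ : S → ℝ) s}

/-- `T_{M,μ}` : elements of `T_μ` whose support has at most `M` points. -/
def barycentricM {S : Type*} [Fintype S] (M : ℕ) (μ : stdSimplex ℝ S) :
    Set (ProbabilityMeasure (stdSimplex ℝ S)) :=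
  {τ | τ ∈ barycentric μ ∧ ∃ F : Finset (stdSimplex ℝ S), F.card ≤ M ∧
    (τ : Measure (stdSimplex ℝ S)) (↑F) = 1}

/-- The regularized (Gibbs/softmax) strategy of a receiver with utility `u`, reference
("irrational") strategy `lam` and regularization parameter `ε`, under belief `ν`. -/
def regStrategy {S α : Type*} [Fintype S] [Fintype α] (u : S → α → ℝ) (lam : α → ℝ)
    (ε : ℝ) (ν : stdSimplex ℝ S) (a : α) : ℝ :=
  lam a * Real.exp (expUtil u ν a / ε) / ∑ b, lam b * Real.exp (expUtil u ν b / ε)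

/-- The regularized sender gain
`W^ε(ν) = Σ_t η(t) Σ_s Σ_a v(s,a) ν(s) Π_ℓ θ^ε_{t_ℓ,ν}(a_ℓ)`. -/
def regSenderGain {S L : Type*} [Fintype S] [Fintype L] [DecidableEq L]
    {A T : L → Type*} [∀ l, Fintype (A l)] [∀ l, Fintype (T l)]
    (u : ∀ l, T l → S → A l → ℝ) (v : S → (∀ l, A l) → ℝ) (η : ∀ l, T l → ℝ)
    (lam : ∀ l, A l → ℝ) (ε : ℝ) (ν : stdSimplex ℝ S) : ℝ :=
  ∑ t : ∀ l, T l, (∏ l, η l (t l)) *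
    ∑ s, ∑ a : ∀ l, A l,
      v s a * (ν : S → ℝ) s * ∏ l, regStrategy (u l (t l)) (lam l) ε ν (a l)

open Filter Topology

section StdSimplex

variable {ι : Type*} [Fintype ι]

lemma prod_mem_stdSimplex [DecidableEq ι] {κ : ι → Type*} [∀ i, Fintype (κ i)] {w : ∀ i, κ i → ℝ}
    (hw : ∀ i, w i ∈ stdSimplex ℝ (κ i)) :
    (fun k : ∀ i, κ i => ∏ i, w i (k i)) ∈ stdSimplex ℝ (∀ i, κ i) := by
  refine ⟨fun k => prod_nonneg fun i _ => (hw i).1 (k i), ?_⟩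
  rw [← Fintype.prod_sum]
  exact prod_eq_one fun i _ => (hw i).2

lemma prod_le_of_mem_stdSimplex {κ : ι → Type*} [∀ i, Fintype (κ i)] {w : ∀ i, κ i → ℝ}
    (hw : ∀ i, w i ∈ stdSimplex ℝ (κ i)) (k : ∀ i, κ i) (i₀ : ι) :
    ∏ i, w i (k i) ≤ w i₀ (k i₀) := by
  classical
  rw [← mul_prod_erase univ _ (mem_univ i₀)]
  exact mul_le_of_le_one_right ((hw i₀).1 _)
    (prod_le_one (fun i _ => (hw i).1 _) fun i _ => stdSimplex.le_one ⟨w i, hw i⟩ (k i))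

lemma sum_mul_le_of_mem_stdSimplex {w f g : ι → ℝ} {c : ℝ} (hw : w ∈ stdSimplex ℝ ι)
    (hfg : ∀ i, f i ≤ c + g i) : ∑ i, w i * f i ≤ c + ∑ i, w i * g i :=
  calc ∑ i, w i * f i ≤ ∑ i, w i * (c + g i) :=
        sum_le_sum fun i _ => mul_le_mul_of_nonneg_left (hfg i) (hw.1 i)
    _ = c + ∑ i, w i * g i := by simp_rw [mul_add, sum_add_distrib, ← sum_mul, hw.2, one_mul]

lemma abs_sum_mul_le_of_mem_stdSimplex {w f : ι → ℝ} {C : ℝ} (hw : w ∈ stdSimplex ℝ ι)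
    (hf : ∀ i, |f i| ≤ C) : |∑ i, w i * f i| ≤ C :=
  calc |∑ i, w i * f i| ≤ ∑ i, w i * C := by
        refine (abs_sum_le_sum_abs _ _).trans (sum_le_sum fun i _ => ?_)
        rw [abs_mul, abs_of_nonneg (hw.1 i)]
        exact mul_le_mul_of_nonneg_left (hf i) (hw.1 i)
    _ = C := by rw [← sum_mul, hw.2, one_mul]

end StdSimplex

section FiniteSupport

lemma integral_eq_sum_of_measure_finset_eq_one {X : Type*} [MeasurableSpace X]
    [MeasurableSingletonClass X] {μ : Measure X} [IsProbabilityMeasure μ] {F : Finset X}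
    (hF : μ F = 1) (f : X → ℝ) : ∫ x, f x ∂μ = ∑ y ∈ F, μ.real {y} * f y := by
  have hae : ∀ᵐ x ∂μ, x ∈ (F : Set X) := (prob_compl_eq_zero_iff F.measurableSet).2 hF
  have h := setIntegral_finset F (IntegrableOn.finset (f := f) (μ := μ))
  rw [Measure.restrict_eq_self_of_ae_mem hae] at h
  simpa only [smul_eq_mul] using h

lemma exists_continuous_le_of_local_bound {X : Type*} [PseudoMetricSpace X] {F : Finset X}
    (hF : F.Nonempty) (h r : X → ℝ) (hr : ∀ y ∈ F, 0 < r y) (C : ℝ) :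
    ∃ g : X → ℝ, Continuous g ∧ (∀ y ∈ F, g y ≤ h y) ∧
      ∀ x z, z ≤ C → (∀ y ∈ F, dist x y < r y → z ≤ h y) → z ≤ g x := by
  refine ⟨fun x => F.inf' hF fun y => h y + |C - h y| / r y * dist x y,
    Continuous.finset_inf'_apply hF fun y _ => by fun_prop,
    fun y hy => (inf'_le _ hy).trans_eq (by simp), fun x z hzC hz => le_inf' hF _ fun y hy => ?_⟩
  have hslope : 0 ≤ |C - h y| / r y := div_nonneg (abs_nonneg _) (hr y hy).le
  by_cases hxy : dist x y < r y
  · exact (hz y hy hxy).trans (le_add_of_nonneg_right (mul_nonneg hslope dist_nonneg))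
  · calc z ≤ h y + |C - h y| := by linarith [le_abs_self (C - h y)]
      _ = h y + |C - h y| / r y * r y := by rw [div_mul_cancel₀ _ (hr y hy).ne']
      _ ≤ h y + |C - h y| / r y * dist x y := by gcongr; exact not_lt.1 hxy

theorem limsup_integral_le_integral_of_finite_support {X ι : Type*} [MetricSpace X]
    [CompactSpace X] [MeasurableSpace X] [BorelSpace X] {l : Filter ι} [l.NeBot]
    {τ : ι → ProbabilityMeasure X} {τ₀ : ProbabilityMeasure X} (hτ : Tendsto τ l (𝓝 τ₀))
    {F : Finset X} (hF : (τ₀ : Measure X) F = 1) {f : ι → X → ℝ} {h : X → ℝ} {C : ℝ}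
    (hf : ∀ i, Continuous (f i)) (hfC : ∀ i x, |f i x| ≤ C)
    (hfh : ∀ y ∈ F, ∀ δ > 0, ∀ᶠ p in l ×ˢ 𝓝 y, f p.1 p.2 ≤ h y + δ) :
    limsup (fun i => ∫ x, f i x ∂(τ i : Measure X)) l ≤ ∫ x, h x ∂(τ₀ : Measure X) := by
  refine le_of_forall_pos_le_add fun δ hδ => ?_
  have hFne : F.Nonempty := nonempty_iff_ne_empty.2 fun hF0 => by simp [hF0] at hF
  have hloc : ∀ y ∈ F, ∃ r > 0, ∀ᶠ i in l, ∀ x, dist x y < r → f i x ≤ h y + δ := by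
    intro y hy
    obtain ⟨p, hp, q, hq, hpq⟩ := eventually_prod_iff.1 (hfh y hy δ hδ)
    obtain ⟨r, hr, hball⟩ := Metric.eventually_nhds_iff.1 hq
    exact ⟨r, hr, hp.mono fun i hi x hx => hpq hi (hball hx)⟩
  choose! r hr hfr using hloc
  obtain ⟨g, hg, hgF, hfg⟩ := exists_continuous_le_of_local_bound hFne (h · + δ) r hr C
  let gb := BoundedContinuousFunction.mkOfCompact ⟨g, hg⟩
  have hint i : Integrable (f i) (τ i : Measure X) :=
    (BoundedContinuousFunction.mkOfCompact ⟨f i, hf i⟩).integrable _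
  have hle : ∀ᶠ i in l, ∫ x, f i x ∂(τ i : Measure X) ≤ ∫ x, g x ∂(τ i : Measure X) := by
    filter_upwards [(eventually_all_finset F).2 hfr] with i hi
    exact integral_mono (hint i) (gb.integrable _) fun x =>
      hfg x _ (abs_le.1 (hfC i x)).2 fun y hy => hi y hy x
  have hlow i : -C ≤ ∫ x, f i x ∂(τ i : Measure X) := by
    simpa using integral_mono (integrable_const (-C)) (hint i) fun x => (abs_le.1 (hfC i x)).1
  have hlim : Tendsto (fun i => ∫ x, g x ∂(τ i : Measure X)) l (𝓝 (∫ x, g x ∂(τ₀ : Measure X))) :=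
    ProbabilityMeasure.tendsto_iff_forall_integral_tendsto.1 hτ gb
  have hF1 : ∑ y ∈ F, (τ₀ : Measure X).real {y} = 1 := by
    rw [sum_measureReal_singleton, measureReal_def, hF, ENNReal.toReal_one]
  calc limsup (fun i => ∫ x, f i x ∂(τ i : Measure X)) l
      ≤ limsup (fun i => ∫ x, g x ∂(τ i : Measure X)) l :=
        limsup_le_limsup hle (isBoundedUnder_of ⟨-C, hlow⟩).isCoboundedUnder_le
          hlim.isBoundedUnder_le
    _ = ∑ y ∈ F, (τ₀ : Measure X).real {y} * g y := by
        rw [hlim.limsup_eq, integral_eq_sum_of_measure_finset_eq_one hF]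
    _ ≤ ∑ y ∈ F, (τ₀ : Measure X).real {y} * (h y + δ) :=
        sum_le_sum fun y hy => mul_le_mul_of_nonneg_left (hgF y hy) measureReal_nonneg
    _ = ∫ x, h x ∂(τ₀ : Measure X) + δ := by
        rw [integral_eq_sum_of_measure_finset_eq_one hF]
        simp_rw [mul_add, sum_add_distrib, ← sum_mul, hF1, one_mul]

end FiniteSupport

section Receiver

variable {S α : Type*} [Fintype S]

@[fun_prop]
lemma continuous_expUtil (u : S → α → ℝ) (a : α) :
    Continuous fun ν : stdSimplex ℝ S => expUtil u ν a :=
  continuous_finsetSum _ fun s _ =>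
    continuous_const.mul ((continuous_apply s).comp continuous_subtype_val)

variable [Fintype α]

lemma abs_expUtil_le (u : S → α → ℝ) (ν : stdSimplex ℝ S) (a : α) : |expUtil u ν a| ≤ ‖u‖ := by
  rw [expUtil]
  simp_rw [mul_comm (u _ a)]
  exact abs_sum_mul_le_of_mem_stdSimplex ν.2 fun s =>
    (norm_le_pi_norm (u s) a).trans (norm_le_pi_norm u s)

variable (u : S → α → ℝ) {lam : α → ℝ} (hlam : ∀ a, 0 < lam a)
include hlam

lemma regStrategy_le_mul_exp (e : ℝ) (ν : stdSimplex ℝ S) (b c : α) :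
    regStrategy u lam e ν b ≤
      lam b / lam c * Real.exp ((expUtil u ν b - expUtil u ν c) / e) := by
  have hc : 0 < lam c * Real.exp (expUtil u ν c / e) := mul_pos (hlam c) (Real.exp_pos _)
  calc regStrategy u lam e ν b
      ≤ lam b * Real.exp (expUtil u ν b / e) / (lam c * Real.exp (expUtil u ν c / e)) :=
        div_le_div_of_nonneg_left (mul_pos (hlam b) (Real.exp_pos _)).le hc
          (single_le_sum (f := fun b' => lam b' * Real.exp (expUtil u ν b' / e))
            (fun b' _ => (mul_pos (hlam b') (Real.exp_pos _)).le) (mem_univ c))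
    _ = lam b / lam c * Real.exp ((expUtil u ν b - expUtil u ν c) / e) := by
        rw [sub_div, Real.exp_sub, mul_div_mul_comm]

variable [Nonempty α]

lemma regStrategy_mem_stdSimplex (e : ℝ) (ν : stdSimplex ℝ S) :
    regStrategy u lam e ν ∈ stdSimplex ℝ α := by
  have hD : 0 < ∑ b, lam b * Real.exp (expUtil u ν b / e) :=
    sum_pos (fun b _ => by have := hlam b; positivity) univ_nonempty
  refine ⟨fun a => by have := hlam a; unfold regStrategy; positivity, ?_⟩
  simp only [regStrategy, ← sum_div, div_self hD.ne']

lemma continuous_regStrategy (e : ℝ) (a : α) :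
    Continuous fun ν : stdSimplex ℝ S => regStrategy u lam e ν a := by
  unfold regStrategy
  refine Continuous.div (by fun_prop) (by fun_prop) fun ν => (sum_pos (fun b _ => ?_)
    univ_nonempty).ne'
  have := hlam b; positivity

lemma tendsto_regStrategy_of_notMem_admissible {x : stdSimplex ℝ S} {b : α}
    (hb : b ∉ admissible u x) :
    Tendsto (fun p : ℝ × stdSimplex ℝ S => regStrategy u lam p.1 p.2 b)
      (𝓝[>] 0 ×ˢ 𝓝 x) (𝓝 0) := by
  obtain ⟨c, hc⟩ : ∃ c, expUtil u x b < expUtil u x c := by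
    simpa [admissible] using hb
  have hgap : Tendsto (fun p : ℝ × stdSimplex ℝ S =>
      (expUtil u p.2 c - expUtil u p.2 b) * p.1⁻¹) (𝓝[>] 0 ×ˢ 𝓝 x) atTop :=
    Tendsto.pos_mul_atTop (sub_pos.2 hc)
      ((((continuous_expUtil u c).sub (continuous_expUtil u b)).tendsto x).comp tendsto_snd)
      (tendsto_inv_nhdsGT_zero.comp tendsto_fst)
  have hbound : Tendsto (fun p : ℝ × stdSimplex ℝ S =>
      lam b / lam c * Real.exp ((expUtil u p.2 b - expUtil u p.2 c) / p.1))
      (𝓝[>] 0 ×ˢ 𝓝 x) (𝓝 0) := by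
    have h := (Real.tendsto_exp_atBot.comp (tendsto_neg_atTop_atBot.comp hgap)).const_mul
      (lam b / lam c)
    rw [mul_zero] at h
    refine h.congr fun p => ?_
    simp only [Function.comp_apply]
    congr 2
    ring
  exact squeeze_zero (fun p => (regStrategy_mem_stdSimplex u hlam p.1 p.2).1 b)
    (fun p => regStrategy_le_mul_exp u hlam p.1 p.2 b c) hbound

end Receiver

section Sender

variable {S L : Type*} [Fintype S] [Fintype L] {A : L → Type*} [∀ l, Fintype (A l)]

def regProfile (w : ∀ l, S → A l → ℝ) (lam : ∀ l, A l → ℝ) (e : ℝ) (ν : stdSimplex ℝ S)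
    (a : ∀ l, A l) : ℝ :=
  ∏ l, regStrategy (w l) (lam l) e ν (a l)

/-- The inner `max_{a ∈ A*_t(x)} Σ_s v(s,a) x(s)` of `senderGain`, with `w l = u l (t l)`. -/
def admissibleValue (w : ∀ l, S → A l → ℝ) (v : S → (∀ l, A l) → ℝ) (x : stdSimplex ℝ S) : ℝ :=
  sSup {r : ℝ | ∃ a : ∀ l, A l, (∀ l, a l ∈ admissible (w l) x) ∧
    r = ∑ s, v s a * (x : S → ℝ) s}

variable (v : S → (∀ l, A l) → ℝ) {lam : ∀ l, A l → ℝ}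

lemma expUtil_le_admissibleValue (w : ∀ l, S → A l → ℝ) {x : stdSimplex ℝ S} {a : ∀ l, A l}
    (ha : ∀ l, a l ∈ admissible (w l) x) : expUtil v x a ≤ admissibleValue w v x := by
  refine le_csSup (Set.Finite.bddAbove ?_) ⟨a, ha, rfl⟩
  refine (Set.finite_range fun a : ∀ l, A l => expUtil v x a).subset ?_
  rintro _ ⟨a, -, rfl⟩
  exact ⟨a, rfl⟩

variable [DecidableEq L] {T : L → Type*} [∀ l, Fintype (T l)] (u : ∀ l, T l → S → A l → ℝ)
  (η : ∀ l, T l → ℝ)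

lemma regSenderGain_eq (e : ℝ) (ν : stdSimplex ℝ S) :
    regSenderGain u v η lam e ν = ∑ t : ∀ l, T l, (∏ l, η l (t l)) *
      ∑ a, regProfile (fun l => u l (t l)) lam e ν a * expUtil v ν a := by
  unfold regSenderGain
  refine sum_congr rfl fun t _ => congrArg _ ?_
  rw [sum_comm]
  refine sum_congr rfl fun a _ => ?_
  rw [regProfile, expUtil, mul_sum]
  exact sum_congr rfl fun s _ => by ring

variable [∀ l, Nonempty (A l)] (hlam : ∀ l a, 0 < lam l a)
include hlam

lemma regProfile_mem_stdSimplex (w : ∀ l, S → A l → ℝ) (e : ℝ) (ν : stdSimplex ℝ S) :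
    regProfile w lam e ν ∈ stdSimplex ℝ (∀ l, A l) :=
  prod_mem_stdSimplex fun l => regStrategy_mem_stdSimplex (w l) (hlam l) e ν

lemma tendsto_regProfile_of_not_admissible (w : ∀ l, S → A l → ℝ) {x : stdSimplex ℝ S}
    {a : ∀ l, A l} (ha : ¬ ∀ l, a l ∈ admissible (w l) x) :
    Tendsto (fun p : ℝ × stdSimplex ℝ S => regProfile w lam p.1 p.2 a)
      (𝓝[>] 0 ×ˢ 𝓝 x) (𝓝 0) := by
  obtain ⟨l₀, hl₀⟩ := not_forall.1 ha
  exact squeeze_zero (fun p => (regProfile_mem_stdSimplex hlam w p.1 p.2).1 a)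
    (fun p => prod_le_of_mem_stdSimplex
      (fun l => regStrategy_mem_stdSimplex (w l) (hlam l) p.1 p.2) a l₀)
    (tendsto_regStrategy_of_notMem_admissible (w l₀) (hlam l₀) hl₀)

lemma eventually_sum_regProfile_mul_le (w : ∀ l, S → A l → ℝ) (x : stdSimplex ℝ S) {δ : ℝ}
    (hδ : 0 < δ) : ∀ᶠ p : ℝ × stdSimplex ℝ S in 𝓝[>] 0 ×ˢ 𝓝 x,
      ∑ a, regProfile w lam p.1 p.2 a * expUtil v p.2 a ≤ admissibleValue w v x + δ := by
  set V := admissibleValue w v x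
  -- `expUtil v ν a ≤ V + err p a`. The first error term vanishes by continuity; the second is
  -- nonzero only for non-admissible `a`, whose weight vanishes.
  let err (p : ℝ × stdSimplex ℝ S) (a : ∀ l, A l) : ℝ :=
    |expUtil v p.2 a - expUtil v x a| + max (expUtil v x a - V) 0
  have hdist a : Tendsto (fun p : ℝ × stdSimplex ℝ S => |expUtil v p.2 a - expUtil v x a|)
      (𝓝[>] 0 ×ˢ 𝓝 x) (𝓝 0) := by
    have hc : Continuous fun ν => |expUtil v ν a - expUtil v x a| := by fun_prop
    simpa [Function.comp_def] using (hc.tendsto x).comp tendsto_snd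
  have hterm a : Tendsto (fun p => regProfile w lam p.1 p.2 a * err p a)
      (𝓝[>] 0 ×ˢ 𝓝 x) (𝓝 0) := by
    by_cases ha : ∀ l, a l ∈ admissible (w l) x
    · have hV : max (expUtil v x a - V) 0 = 0 :=
        max_eq_right (sub_nonpos.2 (expUtil_le_admissibleValue v w ha))
      refine squeeze_zero (fun p => ?_) (fun p => ?_) (hdist a)
      · exact mul_nonneg ((regProfile_mem_stdSimplex hlam w p.1 p.2).1 a) (by positivity)
      · simp only [err, hV, add_zero]
        exact mul_le_of_le_one_left (abs_nonneg _)
          (stdSimplex.le_one ⟨_, regProfile_mem_stdSimplex hlam w p.1 p.2⟩ a)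
    · simpa using (tendsto_regProfile_of_not_admissible hlam w ha).mul
        ((hdist a).add_const (max (expUtil v x a - V) 0))
  have herr : Tendsto (fun p => ∑ a, regProfile w lam p.1 p.2 a * err p a)
      (𝓝[>] 0 ×ˢ 𝓝 x) (𝓝 0) := by
    simpa using tendsto_finsetSum univ fun a _ => hterm a
  filter_upwards [herr.eventually (gt_mem_nhds hδ)] with p hp
  calc ∑ a, regProfile w lam p.1 p.2 a * expUtil v p.2 a
      ≤ V + ∑ a, regProfile w lam p.1 p.2 a * err p a :=
        sum_mul_le_of_mem_stdSimplex (regProfile_mem_stdSimplex hlam w p.1 p.2) fun a => by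
          simp only [err]
          linarith [le_abs_self (expUtil v p.2 a - expUtil v x a),
            le_max_left (expUtil v x a - V) 0]
    _ ≤ V + δ := by linarith

lemma continuous_regSenderGain (e : ℝ) :
    Continuous fun ν : stdSimplex ℝ S => regSenderGain u v η lam e ν := by
  simp_rw [regSenderGain_eq v u η, regProfile]
  exact continuous_finsetSum _ fun t _ => continuous_const.mul <|
    continuous_finsetSum _ fun a _ => (continuous_finsetProd _ fun l _ =>
      continuous_regStrategy _ (hlam l) e _).mul (continuous_expUtil v a)

variable {η} (hη : ∀ l, η l ∈ stdSimplex ℝ (T l))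
include hη

lemma abs_regSenderGain_le (e : ℝ) (ν : stdSimplex ℝ S) :
    |regSenderGain u v η lam e ν| ≤ ‖v‖ := by
  rw [regSenderGain_eq v u η]
  exact abs_sum_mul_le_of_mem_stdSimplex (prod_mem_stdSimplex hη) fun t =>
    abs_sum_mul_le_of_mem_stdSimplex (regProfile_mem_stdSimplex hlam _ e ν) fun a =>
      abs_expUtil_le v ν a

theorem eventually_regSenderGain_le (x : stdSimplex ℝ S) {δ : ℝ} (hδ : 0 < δ) :
    ∀ᶠ p : ℝ × stdSimplex ℝ S in 𝓝[>] 0 ×ˢ 𝓝 x,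
      regSenderGain u v η lam p.1 p.2 ≤ senderGain u v η x + δ := by
  filter_upwards [eventually_all.2 fun t : ∀ l, T l =>
    eventually_sum_regProfile_mul_le v hlam (fun l => u l (t l)) x hδ] with p hp
  rw [regSenderGain_eq v u η, add_comm]
  exact sum_mul_le_of_mem_stdSimplex (prod_mem_stdSimplex hη) fun t => (hp t).trans_eq
    (add_comm _ _)

end Sender

theorem limsup_reg_value_le_general {S : Type*} [Fintype S]
    {L : Type*} [Fintype L] [DecidableEq L]
    {A : L → Type*} [∀ l, Fintype (A l)] [∀ l, Nonempty (A l)]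
    {T : L → Type*} [∀ l, Fintype (T l)]
    (u : ∀ l, T l → S → A l → ℝ) (v : S → (∀ l, A l) → ℝ)
    (η : ∀ l, T l → ℝ) (hη : ∀ l, η l ∈ stdSimplex ℝ (T l))
    (lam : ∀ l, A l → ℝ)
    (hlampos : ∀ l a, 0 < lam l a)
    (M : ℕ) (μ : stdSimplex ℝ S)
    (ε : ℕ → ℝ) (hε : ∀ n, 0 < ε n) (hε0 : Filter.Tendsto ε Filter.atTop (nhds 0))
    (τseq : ℕ → ProbabilityMeasure (stdSimplex ℝ S))
    (τ0 : ProbabilityMeasure (stdSimplex ℝ S)) (hτ0 : τ0 ∈ barycentricM M μ)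
    (hconv : Filter.Tendsto τseq Filter.atTop (nhds τ0)) :
    Filter.limsup
        (fun n => ∫ ν, regSenderGain u v η lam (ε n) ν
          ∂(τseq n : Measure (stdSimplex ℝ S)))
        Filter.atTop ≤
      ∫ ν, senderGain u v η ν ∂(τ0 : Measure (stdSimplex ℝ S)) := by
  obtain ⟨-, F, -, hF⟩ := hτ0
  have hε' : Tendsto ε atTop (𝓝[>] 0) := tendsto_nhdsWithin_iff.2 ⟨hε0, .of_forall hε⟩
  exact limsup_integral_le_integral_of_finite_support hconv hF
    (fun n => continuous_regSenderGain v u η hlampos (ε n))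
    (fun n => abs_regSenderGain_le v u hlampos hη (ε n))
    fun y _ δ hδ => (hε'.prodMap tendsto_id).eventually
      (eventually_regSenderGain_le v u hlampos hη y hδ)

/-- If `ε_n → 0⁺` and `τ^{ε_n} ∈ T_{M,μ}` converges weakly to
`τ⁰ ∈ T_{M,μ}`, then `limsup_n ∫ W^{ε_n} dτ^{ε_n} ≤ ∫ W dτ⁰`. -/
theorem limsup_reg_value_le {S : Type*} [Fintype S] [Nonempty S]
    {L : Type*} [Fintype L] [DecidableEq L]
    {A : L → Type*} [∀ l, Fintype (A l)] [∀ l, Nonempty (A l)]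
    {T : L → Type*} [∀ l, Fintype (T l)] [∀ l, Nonempty (T l)]
    (u : ∀ l, T l → S → A l → ℝ) (v : S → (∀ l, A l) → ℝ)
    (η : ∀ l, T l → ℝ) (hη : ∀ l, η l ∈ stdSimplex ℝ (T l))
    (lam : ∀ l, A l → ℝ) (hlam : ∀ l, lam l ∈ stdSimplex ℝ (A l))
    (hlampos : ∀ l a, 0 < lam l a)
    (M : ℕ) (μ : stdSimplex ℝ S)
    (ε : ℕ → ℝ) (hε : ∀ n, 0 < ε n) (hε0 : Filter.Tendsto ε Filter.atTop (nhds 0))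
    (τseq : ℕ → ProbabilityMeasure (stdSimplex ℝ S))
    (hτseq : ∀ n, τseq n ∈ barycentricM M μ)
    (τ0 : ProbabilityMeasure (stdSimplex ℝ S)) (hτ0 : τ0 ∈ barycentricM M μ)
    (hconv : Filter.Tendsto τseq Filter.atTop (nhds τ0)) :
    Filter.limsup
        (fun n => ∫ ν, regSenderGain u v η lam (ε n) ν
          ∂(τseq n : Measure (stdSimplex ℝ S)))
        Filter.atTop ≤
      ∫ ν, senderGain u v η ν ∂(τ0 : Measure (stdSimplex ℝ S)) :=
  limsup_reg_value_le_general u v η hη lam hlampos M μ ε hε hε0 τseq τ0 hτ0 hconv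

end
end

section
/- Consider one receiver with one type, S = {s₁, s₂}, A = {a₁, a₂}, λ = (1/2, 1/2), μ = (1/2, 1/2), receiver utility u(s₁,a₁) = 1 and u(s₂,a₁) = u(s₁,a₂) = u(s₂,a₂) = 0, and sender utility v(s,a₁) = 0, v(s,a₂) = 1 for both s. Then W̄* = sup_{τ ∈ T_μ} ∫_{Δ(S)} W dτ = 1/2, while lim_{ε→0⁺} W̄^{ε,*} = 1/4, where W̄^{ε,*} = sup_{τ ∈ T_μ} ∫_{Δ(S)} W^ε dτ; in particular lim_{ε→0⁺} W̄^{ε,*} < W̄*. -/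
open MeasureTheory Finset

noncomputable section

/-- Regularized sender's gain for a single receiver with a single type:
`W^ε(ν) = Σ_s Σ_a v(s,a) ν(s) θ^ε_ν(a)`. -/
def regSenderGain₁ {S α : Type*} [Fintype S] [Fintype α] (u v : S → α → ℝ)
    (lam : α → ℝ) (ε : ℝ) (ν : stdSimplex ℝ S) : ℝ :=
  ∑ s, ∑ a, v s a * (ν : S → ℝ) s * regStrategy u lam ε ν a

/-! Both gains depend on `ν` only through `p = ν(s₁)`: `W = 𝟙{p = 0}` and `W^ε = σ(-p/ε)` with `σ`
the logistic function. Each lies below the chord through its values at the two vertices of the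
simplex (for `W^ε` because `σ` is convex on `(-∞, 0]`), so for every splitting `τ` of `μ` the
integral of the gain is at most that chord at the barycenter `μ`, and splitting `μ` into the two
vertices attains this bound. Hence `W̄* = 1/2` and `W̄^{ε,*} = 1/4 + σ(-1/ε)/2 → 1/4`. -/

open Real Set

theorem Real.convexOn_sigmoid_Iic : ConvexOn ℝ (Iic 0) sigmoid := by
  refine MonotoneOn.convexOn_of_deriv (convex_Iic 0) continuous_sigmoid.continuousOn
    differentiable_sigmoid.differentiableOn ?_
  rw [interior_Iic, deriv_sigmoid]
  intro x hx y hy hxy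
  have hy_half : sigmoid y ≤ 2⁻¹ := sigmoid_zero ▸ sigmoid_le hy.le
  have hxy' : sigmoid x ≤ sigmoid y := sigmoid_le hxy
  nlinarith

namespace stdSimplex

variable {S : Type*} [Fintype S]

theorem measurable_apply (s : S) : Measurable fun ν : stdSimplex ℝ S => ν s :=
  (measurable_pi_apply s).comp measurable_subtype_coe

theorem integrable_apply (τ : ProbabilityMeasure (stdSimplex ℝ S)) (s : S) :
    Integrable (fun ν : stdSimplex ℝ S => ν s) τ :=
  .of_bound (measurable_apply s).aestronglyMeasurable 1 <| .of_forall fun ν => by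
    simp [abs_of_nonneg (zero_le ν s)]

variable [DecidableEq S]

def vertexInterpolation (f : stdSimplex ℝ S → ℝ) (ν : stdSimplex ℝ S) : ℝ :=
  ∑ s, ν s * f (vertex s)

def vertexSplitting (μ : stdSimplex ℝ S) : ProbabilityMeasure (stdSimplex ℝ S) :=
  ⟨∑ s, ENNReal.ofReal (μ s) • Measure.dirac (vertex s), ⟨by
    simp [← ENNReal.ofReal_sum_of_nonneg fun s _ => zero_le μ s]⟩⟩

theorem integral_vertexSplitting (μ : stdSimplex ℝ S) (f : stdSimplex ℝ S → ℝ) :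
    ∫ ν, f ν ∂(vertexSplitting μ : Measure (stdSimplex ℝ S)) = vertexInterpolation f μ := by
  rw [vertexSplitting, ProbabilityMeasure.coe_mk, integral_finsetSum_measure fun s _ =>
    (integrable_dirac (by simp)).smul_measure (by simp)]
  simp [vertexInterpolation, integral_smul_measure, ENNReal.toReal_ofReal (zero_le μ _)]

theorem vertexSplitting_mem_barycentric (μ : stdSimplex ℝ S) :
    vertexSplitting μ ∈ barycentric μ := fun s => by
  simp [integral_vertexSplitting, vertexInterpolation, Pi.single_apply]

theorem integral_le_vertexInterpolation {μ : stdSimplex ℝ S}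
    {τ : ProbabilityMeasure (stdSimplex ℝ S)} (hτ : τ ∈ barycentric μ)
    {f : stdSimplex ℝ S → ℝ} (hf : Integrable f τ)
    (hf_le : ∀ ν, f ν ≤ vertexInterpolation f ν) :
    ∫ ν, f ν ∂(τ : Measure (stdSimplex ℝ S)) ≤ vertexInterpolation f μ :=
  calc ∫ ν, f ν ∂(τ : Measure (stdSimplex ℝ S))
      ≤ ∫ ν, vertexInterpolation f ν ∂(τ : Measure (stdSimplex ℝ S)) :=
        integral_mono hf (integrable_finsetSum _ fun s _ => (integrable_apply τ s).mul_const _)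
          hf_le
    _ = vertexInterpolation f μ := by
        simp only [vertexInterpolation]
        rw [integral_finsetSum _ fun s _ => (integrable_apply τ s).mul_const _]
        simp_rw [integral_mul_const]
        exact Finset.sum_congr rfl fun s _ => by rw [hτ s]

theorem sSup_integral_barycentric_eq_vertexInterpolation {f : stdSimplex ℝ S → ℝ}
    (hf_meas : Measurable f) (hf_bdd : ∃ C, ∀ ν, |f ν| ≤ C)
    (hf_le : ∀ ν, f ν ≤ vertexInterpolation f ν) (μ : stdSimplex ℝ S) :
    sSup {x : ℝ | ∃ τ ∈ barycentric μ, x = ∫ ν, f ν ∂(τ : Measure (stdSimplex ℝ S))} =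
      vertexInterpolation f μ := by
  obtain ⟨C, hC⟩ := hf_bdd
  refine IsGreatest.csSup_eq ⟨⟨vertexSplitting μ, vertexSplitting_mem_barycentric μ,
    (integral_vertexSplitting μ f).symm⟩, ?_⟩
  rintro x ⟨τ, hτ, rfl⟩
  exact integral_le_vertexInterpolation hτ
    (.of_bound hf_meas.aestronglyMeasurable C (.of_forall hC)) hf_le

end stdSimplex

namespace SharpnessExample

variable {u v : Fin 2 → Fin 2 → ℝ}

theorem expUtil_u (hu : ∀ s a, u s a = if s = 0 ∧ a = 0 then 1 else 0)
    (ν : stdSimplex ℝ (Fin 2)) (a : Fin 2) : expUtil u ν a = if a = 0 then ν 0 else 0 := by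
  fin_cases a <;> simp [expUtil, hu]

theorem expUtil_v (hv : ∀ s a, v s a = if a = 1 then 1 else 0)
    (ν : stdSimplex ℝ (Fin 2)) (a : Fin 2) : expUtil v ν a = if a = 1 then 1 else 0 := by
  fin_cases a <;> simp [expUtil, hv]

theorem mem_admissible_iff (hu : ∀ s a, u s a = if s = 0 ∧ a = 0 then 1 else 0)
    (ν : stdSimplex ℝ (Fin 2)) (a : Fin 2) : a ∈ admissible u ν ↔ a = 0 ∨ ν 0 = 0 := by
  simp only [admissible, Set.mem_ofPred_eq, Fin.forall_fin_two, expUtil_u hu]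
  have h0 := stdSimplex.zero_le ν 0
  fin_cases a
  · simp
  · simp only [↓reduceIte, Fin.isValue, Fin.mk_one, one_ne_zero, le_refl, and_true, false_or]
    exact ⟨fun h => le_antisymm h h0, le_of_eq⟩

theorem senderGain₁_eq (hu : ∀ s a, u s a = if s = 0 ∧ a = 0 then 1 else 0)
    (hv : ∀ s a, v s a = if a = 1 then 1 else 0) (ν : stdSimplex ℝ (Fin 2)) :
    senderGain₁ u v ν = if ν 0 = 0 then 1 else 0 := by
  simp only [senderGain₁, mem_admissible_iff hu, expUtil_v hv]
  split_ifs with h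
  · simp only [h, or_true, true_and, Fin.exists_fin_two, zero_ne_one, ↓reduceIte]
    change sSup ({0, 1} : Set ℝ) = 1
    simp
  · simp [h]

theorem regSenderGain₁_eq (hu : ∀ s a, u s a = if s = 0 ∧ a = 0 then 1 else 0)
    (hv : ∀ s a, v s a = if a = 1 then 1 else 0) {lam : Fin 2 → ℝ} (hlam : ∀ a, lam a = 1 / 2)
    (ε : ℝ) (ν : stdSimplex ℝ (Fin 2)) :
    regSenderGain₁ u v lam ε ν = sigmoid (-(ν 0 / ε)) := by
  have hE := exp_pos (ν 0 / ε)
  simp only [regSenderGain₁, regStrategy, Fin.sum_univ_two, expUtil_u hu, hv, hlam,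
    sigmoid_def, neg_neg]
  field_simp
  simp [stdSimplex.add_eq_one ν, add_comm]

theorem senderGain₁_le_vertexInterpolation (hu : ∀ s a, u s a = if s = 0 ∧ a = 0 then 1 else 0)
    (hv : ∀ s a, v s a = if a = 1 then 1 else 0) (ν : stdSimplex ℝ (Fin 2)) :
    senderGain₁ u v ν ≤ stdSimplex.vertexInterpolation (senderGain₁ u v) ν := by
  simp only [stdSimplex.vertexInterpolation, senderGain₁_eq hu hv, Fin.sum_univ_two]
  have := stdSimplex.add_eq_one ν
  split_ifs <;> simp_all

theorem regSenderGain₁_le_vertexInterpolation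
    (hu : ∀ s a, u s a = if s = 0 ∧ a = 0 then 1 else 0)
    (hv : ∀ s a, v s a = if a = 1 then 1 else 0) {lam : Fin 2 → ℝ} (hlam : ∀ a, lam a = 1 / 2)
    {ε : ℝ} (hε : 0 < ε) (ν : stdSimplex ℝ (Fin 2)) :
    regSenderGain₁ u v lam ε ν ≤
      stdSimplex.vertexInterpolation (regSenderGain₁ u v lam ε) ν := by
  have h := convexOn_sigmoid_Iic.2 (x := -ε⁻¹) (y := 0) (by simp [hε.le]) self_mem_Iic
    (stdSimplex.zero_le ν 0) (stdSimplex.zero_le ν 1) (stdSimplex.add_eq_one ν)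
  simp only [stdSimplex.vertexInterpolation, regSenderGain₁_eq hu hv hlam, Fin.sum_univ_two]
  simpa [div_eq_mul_inv] using h

theorem sSup_integral_senderGain₁ (hu : ∀ s a, u s a = if s = 0 ∧ a = 0 then 1 else 0)
    (hv : ∀ s a, v s a = if a = 1 then 1 else 0)
    {μ : stdSimplex ℝ (Fin 2)} (hμ : ∀ s, μ s = 1 / 2) :
    sSup {x : ℝ | ∃ τ ∈ barycentric μ,
      x = ∫ ν, senderGain₁ u v ν ∂(τ : Measure (stdSimplex ℝ (Fin 2)))} = 1 / 2 := by
  have h_meas : Measurable (senderGain₁ u v) := by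
    simp_rw [funext (senderGain₁_eq hu hv)]
    exact Measurable.ite (stdSimplex.measurable_apply 0 (measurableSet_singleton 0))
      measurable_const measurable_const
  have h_bdd : ∀ ν, |senderGain₁ u v ν| ≤ 1 := fun ν => by
    rw [senderGain₁_eq hu hv]; split_ifs <;> simp
  rw [stdSimplex.sSup_integral_barycentric_eq_vertexInterpolation h_meas ⟨1, h_bdd⟩
    (senderGain₁_le_vertexInterpolation hu hv)]
  simp [stdSimplex.vertexInterpolation, Fin.sum_univ_two, hμ, senderGain₁_eq hu hv]

theorem sSup_integral_regSenderGain₁ (hu : ∀ s a, u s a = if s = 0 ∧ a = 0 then 1 else 0)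
    (hv : ∀ s a, v s a = if a = 1 then 1 else 0) {lam : Fin 2 → ℝ} (hlam : ∀ a, lam a = 1 / 2)
    {μ : stdSimplex ℝ (Fin 2)} (hμ : ∀ s, μ s = 1 / 2) {ε : ℝ} (hε : 0 < ε) :
    sSup {x : ℝ | ∃ τ ∈ barycentric μ,
      x = ∫ ν, regSenderGain₁ u v lam ε ν ∂(τ : Measure (stdSimplex ℝ (Fin 2)))} =
      sigmoid (-ε⁻¹) / 2 + 1 / 4 := by
  have h_meas : Measurable (regSenderGain₁ u v lam ε) := by
    simp_rw [funext (regSenderGain₁_eq hu hv hlam ε)]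
    exact continuous_sigmoid.measurable.comp ((stdSimplex.measurable_apply 0).div_const ε).neg
  have h_bdd : ∀ ν, |regSenderGain₁ u v lam ε ν| ≤ 1 := fun ν => by
    rw [regSenderGain₁_eq hu hv hlam, abs_of_pos (sigmoid_pos _)]
    exact sigmoid_le_one _
  rw [stdSimplex.sSup_integral_barycentric_eq_vertexInterpolation h_meas ⟨1, h_bdd⟩
    (regSenderGain₁_le_vertexInterpolation hu hv hlam hε)]
  simp [stdSimplex.vertexInterpolation, Fin.sum_univ_two, hμ, regSenderGain₁_eq hu hv hlam,
    sigmoid_zero]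
  ring

end SharpnessExample

open SharpnessExample in
/-- **sharpness of the assumption.** In the two-state, two-action,
single-receiver example with `u(s₁,a₁) = 1` (all other receiver utilities `0`),
`v(·,a₁) = 0`, `v(·,a₂) = 1`, uniform `λ` and uniform prior `μ`, one has
`W̄* = 1/2` while `W̄^{ε,*} → 1/4` as `ε → 0⁺`; in particular the regularized optimal
values do not converge to `W̄*`. -/
theorem sharpness_example {u v : Fin 2 → Fin 2 → ℝ}
    (hu : ∀ s a, u s a = if s = 0 ∧ a = 0 then 1 else 0)
    (hv : ∀ s a, v s a = if a = 1 then 1 else 0)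
    (lam : Fin 2 → ℝ) (hlam : ∀ a, lam a = 1 / 2)
    (μ : stdSimplex ℝ (Fin 2)) (hμ : ∀ s, (μ : Fin 2 → ℝ) s = 1 / 2) :
    sSup {x : ℝ | ∃ τ ∈ barycentric μ,
        x = ∫ ν, senderGain₁ u v ν ∂(τ : Measure (stdSimplex ℝ (Fin 2)))} = 1 / 2 ∧
    Filter.Tendsto
      (fun ε => sSup {x : ℝ | ∃ τ ∈ barycentric μ,
        x = ∫ ν, regSenderGain₁ u v lam ε ν ∂(τ : Measure (stdSimplex ℝ (Fin 2)))})
      (nhdsWithin 0 (Set.Ioi (0 : ℝ))) (nhds (1 / 4)) := by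
  refine ⟨sSup_integral_senderGain₁ hu hv hμ, ?_⟩
  have h_lim : Filter.Tendsto (fun ε => sigmoid (-ε⁻¹) / 2 + 1 / 4)
      (nhdsWithin 0 (Set.Ioi (0 : ℝ))) (nhds (1 / 4)) := by
    simpa using ((tendsto_sigmoid_atBot.comp (Filter.tendsto_neg_atTop_atBot.comp
      tendsto_inv_nhdsGT_zero)).div_const 2).add_const (1 / 4 : ℝ)
  exact h_lim.congr' (eventually_nhdsWithin_of_forall fun ε hε =>
    (sSup_integral_regSenderGain₁ hu hv hlam hμ hε).symm)

end
end
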